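/- Let (X_opt, Y_opt) ∈ 𝕆^{n×k} × 𝕆^{m×k} be a global maximizer of F over 𝕆^{n×k} × 𝕆^{m×k}, where C ≠ 0. Then X_optᵀ C Y_opt is symmetric and is either positive semidefinite or negative semidefinite. -/

import Mathlib

open Matrix

/-- The OCCA objective
`F(X, Y) = tr(XᵀCY)² / (tr(XᵀAX) · tr(YᵀBY))` with `A = S₁S₁ᵀ`, `B = S₂S₂ᵀ`, `C = S₁S₂ᵀ`. -/
noncomputable def Fobj {n m k q : ℕ}
    (S₁ : Matrix (Fin n) (Fin q) ℝ) (S₂ : Matrix (Fin m) (Fin q) ℝ)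
    (X : Matrix (Fin n) (Fin k) ℝ) (Y : Matrix (Fin m) (Fin k) ℝ) : ℝ :=
  (Matrix.trace (Xᵀ * (S₁ * S₂ᵀ) * Y)) ^ 2 /
    (Matrix.trace (Xᵀ * (S₁ * S₁ᵀ) * X) * Matrix.trace (Yᵀ * (S₂ * S₂ᵀ) * Y))

/-!
Put `M = X_optᵀ C Y_opt`. Replacing `Y_opt` by `Y_opt O` with `O` orthogonal keeps the constraint
and the denominator of `F`, so `tr(M O)² ≤ tr(M)²` for every orthogonal `O`; after possibly
replacing `M` by `-M`, `tr(M O) ≤ tr M`. Testing this against a Householder reflection `H_x` gives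
`xᵀ M x ≥ 0`. Testing it against `H_{eᵢ} H_{eᵢ + r eⱼ}`, a rotation in the `(i, j)`-plane, gives
`r (M_ji - M_ij) ≤ r² (M_ii + M_jj)` for every real `r`, which forces `M_ij = M_ji`.
-/

lemma eq_zero_of_forall_mul_le_sq_mul {b s : ℝ} (h : ∀ r, r * b ≤ r ^ 2 * s) : b = 0 := by
  have hc : 0 < |s| + 1 := by positivity
  -- with `c = |s| + 1 ≥ s`, `r = b / 4c` turns the hypothesis into `b² / 4c ≤ b² / 16c`
  have hr := h (b / (4 * (|s| + 1)))
  have hs := le_abs_self s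
  field_simp at hr
  nlinarith [sq_nonneg b]

namespace Matrix

variable {ι : Type*} [Fintype ι] [DecidableEq ι]

noncomputable def householder (w : ι → ℝ) : Matrix ι ι ℝ :=
  1 - (2 / (w ⬝ᵥ w)) • vecMulVec w w

lemma transpose_householder (w : ι → ℝ) : (householder w)ᵀ = householder w := by
  simp [householder]

lemma householder_mul_self {w : ι → ℝ} (hw : w ≠ 0) : householder w * householder w = 1 := by
  have hww : w ⬝ᵥ w ≠ 0 := dotProduct_self_eq_zero.not.2 hw
  have hcoef : 2 / (w ⬝ᵥ w) * (w ⬝ᵥ w) = 2 := div_mul_cancel₀ 2 hww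
  simp only [householder, Matrix.sub_mul, Matrix.mul_sub, Matrix.one_mul, Matrix.mul_one,
    Matrix.smul_mul, Matrix.mul_smul, vecMulVec_mul_vecMulVec, vecMulVec_smul, smul_smul]
  rw [hcoef]
  module

lemma householder_mem_orthogonalGroup {w : ι → ℝ} (hw : w ≠ 0) :
    householder w ∈ orthogonalGroup ι ℝ :=
  (mem_orthogonalGroup_iff' ι ℝ).2 (by rw [transpose_householder, householder_mul_self hw])

lemma householder_mulVec (w x : ι → ℝ) :
    householder w *ᵥ x = x - (2 / (w ⬝ᵥ w) * (w ⬝ᵥ x)) • w := by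
  rw [householder, sub_mulVec, one_mulVec, smul_mulVec, vecMulVec_mulVec, op_smul_eq_smul,
    smul_smul]

lemma trace_mul_householder (M : Matrix ι ι ℝ) (w : ι → ℝ) :
    trace (M * householder w) = trace M - 2 / (w ⬝ᵥ w) * (w ⬝ᵥ M *ᵥ w) := by
  rw [householder, Matrix.mul_sub, Matrix.mul_one, Matrix.mul_smul, trace_sub, trace_smul,
    mul_vecMulVec, trace_vecMulVec, dotProduct_comm (M *ᵥ w), smul_eq_mul]

lemma trace_mul_householder_mul_householder (M : Matrix ι ι ℝ) (u v : ι → ℝ) :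
    trace (M * (householder u * householder v)) =
      trace M - 2 / (u ⬝ᵥ u) * (u ⬝ᵥ M *ᵥ u) -
        2 / (v ⬝ᵥ v) * (v ⬝ᵥ M *ᵥ v - 2 / (u ⬝ᵥ u) * (u ⬝ᵥ v) * (v ⬝ᵥ M *ᵥ u)) := by
  rw [← Matrix.mul_assoc, trace_mul_householder, trace_mul_householder, ← mulVec_mulVec,
    householder_mulVec, mulVec_sub, mulVec_smul, dotProduct_sub, dotProduct_smul, smul_eq_mul]

lemma dotProduct_mulVec_nonneg_of_trace_mul_le {M : Matrix ι ι ℝ}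
    (h : ∀ O ∈ orthogonalGroup ι ℝ, trace (M * O) ≤ trace M) (x : ι → ℝ) : 0 ≤ x ⬝ᵥ M *ᵥ x := by
  rcases eq_or_ne x 0 with rfl | hx
  · simp
  have hcoef : 0 < 2 / (x ⬝ᵥ x) :=
    div_pos two_pos (by simpa using dotProduct_self_star_pos_iff.2 hx)
  have hle := h _ (householder_mem_orthogonalGroup hx)
  rw [trace_mul_householder] at hle
  exact nonneg_of_mul_nonneg_right (by linarith) hcoef

lemma mul_sub_le_sq_mul_add_of_trace_mul_le {M : Matrix ι ι ℝ}
    (h : ∀ O ∈ orthogonalGroup ι ℝ, trace (M * O) ≤ trace M)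
    {i j : ι} (hij : i ≠ j) (r : ℝ) :
    r * (M j i - M i j) ≤ r ^ 2 * (M i i + M j j) := by
  set u : ι → ℝ := Pi.single i 1
  set v : ι → ℝ := Pi.single i 1 + r • Pi.single j 1
  have hu : u ≠ 0 := by simp [u]
  have hv : v ≠ 0 := fun h0 => by simpa [v, hij.symm] using congrFun h0 i
  have huu : u ⬝ᵥ u = 1 := by simp [u]
  have huv : u ⬝ᵥ v = 1 := by simp [u, v, hij]
  have hvv : v ⬝ᵥ v = 1 + r ^ 2 := by simp [v, hij, hij.symm, sq]
  have hMuu : u ⬝ᵥ M *ᵥ u = M i i := by simp [u, mulVec_single]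
  have hMvu : v ⬝ᵥ M *ᵥ u = M i i + r * M j i := by simp [u, v, mulVec_single]
  have hMvv : v ⬝ᵥ M *ᵥ v = M i i + r * M j i + r * (M i j + r * M j j) := by
    simp [v, mulVec_single, mulVec_add, mulVec_smul]
  have hle :=
    h _ (mul_mem (householder_mem_orthogonalGroup hu) (householder_mem_orthogonalGroup hv))
  rw [trace_mul_householder_mul_householder, huu, huv, hvv, hMuu, hMvu, hMvv] at hle
  field_simp at hle
  linarith

lemma isSymm_of_trace_mul_le {M : Matrix ι ι ℝ}
    (h : ∀ O ∈ orthogonalGroup ι ℝ, trace (M * O) ≤ trace M) :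
    M.IsSymm :=
  IsSymm.ext fun i j => by
    rcases eq_or_ne i j with rfl | hij
    · rfl
    · exact sub_eq_zero.1 (eq_zero_of_forall_mul_le_sq_mul
        (mul_sub_le_sq_mul_add_of_trace_mul_le h hij))

lemma posSemidef_of_trace_mul_le {M : Matrix ι ι ℝ}
    (h : ∀ O ∈ orthogonalGroup ι ℝ, trace (M * O) ≤ trace M) :
    M.PosSemidef :=
  PosSemidef.of_dotProduct_mulVec_nonneg (isHermitian_iff_isSymm.2 (isSymm_of_trace_mul_le h))
    fun x => by simpa using dotProduct_mulVec_nonneg_of_trace_mul_le h x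

lemma posSemidef_or_neg_posSemidef_of_sq_trace_mul_le {M : Matrix ι ι ℝ}
    (h : ∀ O ∈ orthogonalGroup ι ℝ, trace (M * O) ^ 2 ≤ trace M ^ 2) :
    M.PosSemidef ∨ (-M).PosSemidef := by
  have habs : ∀ O ∈ orthogonalGroup ι ℝ, |trace (M * O)| ≤ |trace M| :=
    fun O hO => sq_le_sq.1 (h O hO)
  rcases le_total 0 (trace M) with hM | hM
  · refine .inl (posSemidef_of_trace_mul_le fun O hO => ?_)
    exact (le_abs_self _).trans ((habs O hO).trans (abs_of_nonneg hM).le)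
  · refine .inr (posSemidef_of_trace_mul_le fun O hO => ?_)
    rw [Matrix.neg_mul, trace_neg, trace_neg]
    exact (neg_le_abs _).trans ((habs O hO).trans (abs_of_nonpos hM).le)

lemma trace_transpose_mul_mul_of_mem_orthogonalGroup {O : Matrix ι ι ℝ}
    (hO : O ∈ orthogonalGroup ι ℝ) (N : Matrix ι ι ℝ) : trace (Oᵀ * N * O) = trace N := by
  rw [trace_mul_cycle, (mem_orthogonalGroup_iff ι ℝ).1 hO, Matrix.one_mul]

lemma trace_transpose_mul_mul_pos {m n : Type*} [Fintype m] [Fintype n] [DecidableEq n]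
    [Nonempty n] {A : Matrix m m ℝ} (hA : A.PosDef) {X : Matrix m n ℝ} (hX : Xᵀ * X = 1) :
    0 < trace (Xᵀ * A * X) := by
  have hinj : Function.Injective X.mulVec :=
    Function.LeftInverse.injective (g := Xᵀ.mulVec) fun v => by
      rw [mulVec_mulVec, hX, one_mulVec]
  simpa [conjTranspose_eq_transpose_of_trivial] using
    (hA.conjTranspose_mul_mul_same hinj).trace_pos

end Matrix

lemma Fobj_mul_of_mem_orthogonalGroup {n m k q : ℕ}
    (S₁ : Matrix (Fin n) (Fin q) ℝ) (S₂ : Matrix (Fin m) (Fin q) ℝ)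
    (X : Matrix (Fin n) (Fin k) ℝ) (Y : Matrix (Fin m) (Fin k) ℝ) {O : Matrix (Fin k) (Fin k) ℝ}
    (hO : O ∈ orthogonalGroup (Fin k) ℝ) :
    Fobj S₁ S₂ X (Y * O) = trace (Xᵀ * (S₁ * S₂ᵀ) * Y * O) ^ 2 /
      (trace (Xᵀ * (S₁ * S₁ᵀ) * X) * trace (Yᵀ * (S₂ * S₂ᵀ) * Y)) := by
  have hconj : (Y * O)ᵀ * (S₂ * S₂ᵀ) * (Y * O) = Oᵀ * (Yᵀ * (S₂ * S₂ᵀ) * Y) * O := by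
    simp only [transpose_mul, Matrix.mul_assoc]
  rw [Fobj, hconj, trace_transpose_mul_mul_of_mem_orthogonalGroup hO, ← Matrix.mul_assoc]

theorem isSymm_and_semidef_of_isMaxOn_Fobj
    (n m k q : ℕ) (hk1 : 1 ≤ k)
    (S₁ : Matrix (Fin n) (Fin q) ℝ) (S₂ : Matrix (Fin m) (Fin q) ℝ)
    (hA : (S₁ * S₁ᵀ).PosDef) (hB : (S₂ * S₂ᵀ).PosDef)
    (Xopt : Matrix (Fin n) (Fin k) ℝ) (Yopt : Matrix (Fin m) (Fin k) ℝ)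
    (hXopt : Xoptᵀ * Xopt = 1) (hYopt : Yoptᵀ * Yopt = 1)
    (hmax : ∀ (X : Matrix (Fin n) (Fin k) ℝ) (Y : Matrix (Fin m) (Fin k) ℝ),
      Xᵀ * X = 1 → Yᵀ * Y = 1 → Fobj S₁ S₂ X Y ≤ Fobj S₁ S₂ Xopt Yopt) :
    (Xoptᵀ * (S₁ * S₂ᵀ) * Yopt).IsSymm ∧
      ((Xoptᵀ * (S₁ * S₂ᵀ) * Yopt).PosSemidef ∨ (-(Xoptᵀ * (S₁ * S₂ᵀ) * Yopt)).PosSemidef) := by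
  have : Nonempty (Fin k) := ⟨⟨0, hk1⟩⟩
  have hden : 0 < trace (Xoptᵀ * (S₁ * S₁ᵀ) * Xopt) * trace (Yoptᵀ * (S₂ * S₂ᵀ) * Yopt) :=
    mul_pos (trace_transpose_mul_mul_pos hA hXopt) (trace_transpose_mul_mul_pos hB hYopt)
  have hsemidef : (Xoptᵀ * (S₁ * S₂ᵀ) * Yopt).PosSemidef ∨
      (-(Xoptᵀ * (S₁ * S₂ᵀ) * Yopt)).PosSemidef := by
    refine posSemidef_or_neg_posSemidef_of_sq_trace_mul_le fun O hO => ?_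
    have hYO : (Yopt * O)ᵀ * (Yopt * O) = 1 := by
      rw [transpose_mul, Matrix.mul_assoc, ← Matrix.mul_assoc Yoptᵀ, hYopt, Matrix.one_mul,
        (mem_orthogonalGroup_iff' (Fin k) ℝ).1 hO]
    have hF := hmax Xopt (Yopt * O) hXopt hYO
    rwa [Fobj_mul_of_mem_orthogonalGroup _ _ _ _ hO, Fobj,
      div_le_div_iff_of_pos_right hden] at hF
  refine ⟨?_, hsemidef⟩
  rcases hsemidef with hM | hM
  · exact isHermitian_iff_isSymm.1 hM.isHermitian
  · simpa using (isHermitian_iff_isSymm.1 hM.isHermitian).neg
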